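/- Let G be a g-dimensional vector space over ℂ and S the polynomial ring on G* ⊕ Λ²G*. Then the intersection of the vanishing ideal of the linear subspace P(Λ²G*) (i.e., the ideal generated by the linear forms in G*) with the Plücker ideal of the Grassmannian G(ℂ ⊕ G*, 2) (generated by Λ³G* ⊕ Λ⁴G* ⊆ S²(G* ⊕ Λ²G*)) equals the ideal generated by Λ³G* alone. -/

import Mathlib

/-! We model `S = Sym(G* ⊕ Λ²G*)` for a `g`-dimensional space `G` in Plücker coordinates:
`Λ²(ℂ ⊕ G*) = G* ⊕ Λ²G*`, so `S` is the polynomial ring in variables `p_{ab}` indexed by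
pairs `a < b` in `Fin (g+1)` (index `0` corresponding to the `ℂ`-summand of `ℂ ⊕ G*`);
the variables `p_{0j}` form a basis of `G*` and the `p_{ij}` with `0 < i < j` a basis of
`Λ²G*`.  The Plücker ideal of `G(ℂ ⊕ G*, 2)` is generated by the 4×4 Pfaffians
`p_{ab}p_{cd} − p_{ac}p_{bd} + p_{ad}p_{bc}` (`a<b<c<d`); those with `a = 0` span the copy
of `Λ³G*` and the others the copy of `Λ⁴G*`.

The projection `π : S → Sym(Λ²G*)` killing `G*` has kernel `L` and fixes the Pfaffians
spanning `Λ⁴G*`. Moreover `G* · Λ⁴G* ⊆ (Λ³G*)`: twice `p_{0e} · Pf_{abcd}` is a combination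
of the `p_{xy} · Pf_{0uvw}`, as one sees by expanding the Pfaffian of the skew `6 × 6` matrix
on `0, e, a, b, c, d` in two ways. So if `f = i + Σ rₖ qₖ ∈ L` with `i ∈ (Λ³G*)` and `qₖ ∈ Λ⁴G*`, then
`π f = π i = 0` gives `f = i + Σ (rₖ - π rₖ) qₖ ∈ (Λ³G*) + L · (Λ⁴G*) ⊆ (Λ³G*)`. -/

abbrev PluckerIndex (g : ℕ) := {q : Fin (g + 1) × Fin (g + 1) // q.1 < q.2}

noncomputable def pfaff (g : ℕ) (a b c d : Fin (g + 1))
    (hab : a < b) (hbc : b < c) (hcd : c < d) : MvPolynomial (PluckerIndex g) ℂ :=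
  MvPolynomial.X ⟨(a, b), hab⟩ * MvPolynomial.X ⟨(c, d), hcd⟩
    - MvPolynomial.X ⟨(a, c), hab.trans hbc⟩ * MvPolynomial.X ⟨(b, d), hbc.trans hcd⟩
    + MvPolynomial.X ⟨(a, d), (hab.trans hbc).trans hcd⟩ * MvPolynomial.X ⟨(b, c), hbc⟩

open MvPolynomial

theorem MvPolynomial.sub_aeval_mem_of_forall_X_sub_mem {σ R : Type*} [CommRing R]
    {L : Ideal (MvPolynomial σ R)} (f : σ → MvPolynomial σ R) (hf : ∀ i, X i - f i ∈ L)
    (r : MvPolynomial σ R) : r - aeval f r ∈ L := by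
  have h : (Ideal.Quotient.mkₐ R L).comp (aeval f) = Ideal.Quotient.mkₐ R L :=
    algHom_ext fun i => by simpa using (Ideal.Quotient.eq.mpr (hf i)).symm
  exact Ideal.Quotient.eq.mp (congrArg (· r) h).symm

theorem Ideal.inf_sup_span_eq_of_retraction {R : Type*} [CommRing R] (φ : R →+* R)
    {L I : Ideal R} {S : Set R} (hLφ : L ≤ RingHom.ker φ) (hφ : ∀ r, r - φ r ∈ L)
    (hIL : I ≤ L) (hS : ∀ s ∈ S, φ s = s) (hLS : L * Ideal.span S ≤ I) :
    L ⊓ (I ⊔ Ideal.span S) = I := by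
  have hsub : ∀ j ∈ Ideal.span S, j - φ j ∈ L * Ideal.span S := by
    intro j hj
    induction hj using Submodule.span_induction with
    | mem s hs => simp [hS s hs]
    | zero => simp
    | add x y _ _ hx hy => simpa [add_sub_add_comm] using add_mem hx hy
    | smul r x hxS hx =>
      rw [smul_eq_mul, map_mul,
        show r * x - φ r * φ x = (r - φ r) * x + φ r * (x - φ x) by ring]
      exact add_mem (Ideal.mul_mem_mul (hφ r) hxS) (Ideal.mul_mem_left _ _ hx)
  refine le_antisymm ?_ (le_inf hIL le_sup_left)
  rintro f ⟨hfL, hf⟩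
  obtain ⟨i, hi, j, hj, rfl⟩ := Submodule.mem_sup.mp hf
  have hφj : φ j = 0 := by
    have h0 : φ (i + j) = 0 := hLφ hfL
    rwa [map_add, hLφ (hIL hi), zero_add] at h0
  exact add_mem hi (hLS (by simpa [hφj] using hsub j hj))

namespace Plucker

variable (g : ℕ)

def linearForms : Set (MvPolynomial (PluckerIndex g) ℂ) :=
  {f | ∃ (j : Fin (g + 1)) (h : (0 : Fin (g + 1)) < j), f = X ⟨(0, j), h⟩}

def pfaffiansWithZero : Set (MvPolynomial (PluckerIndex g) ℂ) :=
  {f | ∃ (b c d : Fin (g + 1)) (h0b : (0 : Fin (g + 1)) < b) (hbc : b < c) (hcd : c < d),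
    f = pfaff g 0 b c d h0b hbc hcd}

def pfaffiansWithoutZero : Set (MvPolynomial (PluckerIndex g) ℂ) :=
  {f | ∃ (a b c d : Fin (g + 1)) (_ : (0 : Fin (g + 1)) < a) (hab : a < b) (hbc : b < c)
    (hcd : c < d), f = pfaff g a b c d hab hbc hcd}

noncomputable def skewX (x y : Fin (g + 1)) : MvPolynomial (PluckerIndex g) ℂ :=
  if h : x < y then X ⟨(x, y), h⟩ else if h' : y < x then -X ⟨(y, x), h'⟩ else 0

theorem skewX_of_lt {x y : Fin (g + 1)} (h : x < y) : skewX g x y = X ⟨(x, y), h⟩ :=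
  dif_pos h

theorem skewX_swap (x y : Fin (g + 1)) : skewX g y x = -skewX g x y := by
  unfold skewX
  rcases lt_trichotomy x y with h | rfl | h
  · simp [h, h.not_gt]
  · simp
  · simp [h, h.not_gt]

theorem skewX_self (x : Fin (g + 1)) : skewX g x x = 0 := by
  simp [skewX]

noncomputable def skewPfaff (a b c d : Fin (g + 1)) : MvPolynomial (PluckerIndex g) ℂ :=
  skewX g a b * skewX g c d - skewX g a c * skewX g b d + skewX g a d * skewX g b c

theorem skewPfaff_of_lt {a b c d : Fin (g + 1)} (hab : a < b) (hbc : b < c) (hcd : c < d) :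
    skewPfaff g a b c d = pfaff g a b c d hab hbc hcd := by
  simp only [skewPfaff, pfaff, skewX_of_lt g hab, skewX_of_lt g hcd, skewX_of_lt g hbc,
    skewX_of_lt g (hab.trans hbc), skewX_of_lt g (hbc.trans hcd),
    skewX_of_lt g ((hab.trans hbc).trans hcd)]

/-- With `Pf` the Pfaffian of the skew `6 × 6` matrix on `0, e, a, b, c, d`: expanding along
the row `e` gives `Pf ≡ p_{0e} Pf_{abcd}` modulo the `Pf_{0uvw}`, and counting each term of `Pf`
once for each of its two factors avoiding `0` gives `2 Pf = Σ ± p_{xy} Pf_{0uvw}`. -/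
theorem two_mul_skewX_mul_skewPfaff (e a b c d : Fin (g + 1)) :
    2 * (skewX g 0 e * skewPfaff g a b c d) =
      skewX g e b * skewPfaff g 0 a c d - skewX g e a * skewPfaff g 0 b c d
      - skewX g e c * skewPfaff g 0 a b d + skewX g e d * skewPfaff g 0 a b c
      + skewX g a b * skewPfaff g 0 e c d - skewX g a c * skewPfaff g 0 e b d
      + skewX g a d * skewPfaff g 0 e b c + skewX g b c * skewPfaff g 0 e a d
      - skewX g b d * skewPfaff g 0 e a c + skewX g c d * skewPfaff g 0 e a b := by
  simp only [skewPfaff]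
  ring

theorem skewPfaff_zero_mem_span {e u v : Fin (g + 1)} (h0e : 0 < e) (h0u : 0 < u) (huv : u < v) :
    skewPfaff g 0 e u v ∈ Ideal.span (pfaffiansWithZero g) := by
  have mem {x y z : Fin (g + 1)} (h0x : 0 < x) (hxy : x < y) (hyz : y < z) :
      skewPfaff g 0 x y z ∈ Ideal.span (pfaffiansWithZero g) :=
    skewPfaff_of_lt g h0x hxy hyz ▸ Ideal.subset_span ⟨x, y, z, h0x, hxy, hyz, rfl⟩
  rcases lt_trichotomy e u with heu | rfl | hue
  · exact mem h0e heu huv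
  · rw [show skewPfaff g 0 e e v = 0 by simp only [skewPfaff, skewX_self]; ring]
    exact zero_mem _
  rcases lt_trichotomy e v with hev | rfl | hve
  · rw [show skewPfaff g 0 e u v = -skewPfaff g 0 u e v by
      simp only [skewPfaff, skewX_swap g u e]; ring]
    exact neg_mem (mem h0u hue hev)
  · rw [show skewPfaff g 0 e u e = 0 by
      simp only [skewPfaff, skewX_self, skewX_swap g u e]; ring]
    exact zero_mem _
  · rw [show skewPfaff g 0 e u v = skewPfaff g 0 u v e by
      simp only [skewPfaff, skewX_swap g u e, skewX_swap g v e]; ring]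
    exact mem h0u huv hve

theorem X_mul_pfaff_mem_span {e a b c d : Fin (g + 1)} (h0e : 0 < e) (h0a : 0 < a) (hab : a < b)
    (hbc : b < c) (hcd : c < d) :
    X ⟨(0, e), h0e⟩ * pfaff g a b c d hab hbc hcd ∈ Ideal.span (pfaffiansWithZero g) := by
  have two_isUnit : IsUnit (2 : MvPolynomial (PluckerIndex g) ℂ) := by
    simpa only [map_ofNat] using (isUnit_of_invertible (2 : ℂ)).map (C : ℂ →+* _)
  rw [← skewX_of_lt g h0e, ← skewPfaff_of_lt g hab hbc hcd,
    ← Ideal.unit_mul_mem_iff_mem _ two_isUnit, two_mul_skewX_mul_skewPfaff]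
  repeat' first
    | apply add_mem
    | apply sub_mem
    | exact Ideal.mul_mem_left _ _ (skewPfaff_zero_mem_span g (by omega) (by omega) (by omega))

noncomputable def projWedgeTwo :
    MvPolynomial (PluckerIndex g) ℂ →ₐ[ℂ] MvPolynomial (PluckerIndex g) ℂ :=
  aeval fun v => if v.1.1 = 0 then 0 else X v

theorem span_linearForms_le_ker :
    Ideal.span (linearForms g) ≤ RingHom.ker (projWedgeTwo g) := by
  rw [Ideal.span_le]
  rintro _ ⟨j, hj, rfl⟩
  simp [projWedgeTwo]

theorem sub_projWedgeTwo_mem (r : MvPolynomial (PluckerIndex g) ℂ) :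
    r - projWedgeTwo g r ∈ Ideal.span (linearForms g) := by
  refine sub_aeval_mem_of_forall_X_sub_mem _ (fun ⟨⟨i, j⟩, hij⟩ => ?_) r
  by_cases hi : i = 0
  · subst hi
    have hX : X ⟨(0, j), hij⟩ ∈ Ideal.span (linearForms g) := Ideal.subset_span ⟨j, hij, rfl⟩
    simpa using hX
  · simp [hi]

theorem projWedgeTwo_pfaff {a b c d : Fin (g + 1)} (h0a : 0 < a) (hab : a < b) (hbc : b < c)
    (hcd : c < d) : projWedgeTwo g (pfaff g a b c d hab hbc hcd) = pfaff g a b c d hab hbc hcd := by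
  have hb : b ≠ 0 := by omega
  have hc : c ≠ 0 := by omega
  simp [projWedgeTwo, pfaff, h0a.ne', hb, hc]

theorem span_pfaffiansWithZero_le :
    Ideal.span (pfaffiansWithZero g) ≤ Ideal.span (linearForms g) := by
  rw [Ideal.span_le]
  rintro _ ⟨b, c, d, h0b, hbc, hcd, rfl⟩
  have hX (j : Fin (g + 1)) (h : 0 < j) : X ⟨(0, j), h⟩ ∈ Ideal.span (linearForms g) :=
    Ideal.subset_span ⟨j, h, rfl⟩
  unfold pfaff
  exact add_mem (sub_mem (Ideal.mul_mem_right _ _ (hX _ _)) (Ideal.mul_mem_right _ _ (hX _ _)))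
    (Ideal.mul_mem_right _ _ (hX _ _))

theorem span_linearForms_mul_le :
    Ideal.span (linearForms g) * Ideal.span (pfaffiansWithoutZero g) ≤
      Ideal.span (pfaffiansWithZero g) := by
  rw [Ideal.span_mul_span', Ideal.span_le]
  rintro _ ⟨_, ⟨e, h0e, rfl⟩, _, ⟨a, b, c, d, h0a, hab, hbc, hcd, rfl⟩, rfl⟩
  exact X_mul_pfaff_mem_span g h0e h0a hab hbc hcd

theorem span_pfaffians_eq_sup :
    Ideal.span {f | ∃ (a b c d : Fin (g + 1)) (hab : a < b) (hbc : b < c) (hcd : c < d),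
        f = pfaff g a b c d hab hbc hcd} =
      Ideal.span (pfaffiansWithZero g) ⊔ Ideal.span (pfaffiansWithoutZero g) := by
  rw [← Ideal.span_union]
  congr 1
  ext f
  simp only [Set.mem_union, pfaffiansWithZero, pfaffiansWithoutZero, Set.mem_ofPred_eq]
  constructor
  · rintro ⟨a, b, c, d, hab, hbc, hcd, rfl⟩
    rcases eq_or_ne a 0 with rfl | ha
    · exact Or.inl ⟨b, c, d, hab, hbc, hcd, rfl⟩
    · exact Or.inr ⟨a, b, c, d, Fin.pos_of_ne_zero ha, hab, hbc, hcd, rfl⟩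
  · rintro (⟨b, c, d, h0b, hbc, hcd, rfl⟩ | ⟨a, b, c, d, -, hab, hbc, hcd, rfl⟩)
    · exact ⟨0, b, c, d, h0b, hbc, hcd, rfl⟩
    · exact ⟨a, b, c, d, hab, hbc, hcd, rfl⟩

end Plucker

open Plucker in
/-- in `S = Sym(G* ⊕ Λ²G*)`, the intersection of the vanishing ideal of the
linear subspace `P(Λ²G*)` (the ideal generated by the linear forms in `G*`) with the
Plücker ideal of `G(ℂ ⊕ G*, 2)` (generated by `Λ³G* ⊕ Λ⁴G*`) equals the ideal generated
by `Λ³G*` alone — the second generic syzygy ideal of `G`. -/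
theorem stmt_4 (g : ℕ)
    (L Pl I₁ : Ideal (MvPolynomial (PluckerIndex g) ℂ))
    -- the ideal generated by the linear forms in `G*` :
    (hL : L = Ideal.span {f | ∃ (j : Fin (g + 1)) (h : (0 : Fin (g + 1)) < j),
        f = MvPolynomial.X ⟨(0, j), h⟩})
    -- the Plücker ideal, generated by `Λ³G* ⊕ Λ⁴G* = Λ⁴(ℂ ⊕ G*)` :
    (hPl : Pl = Ideal.span {f | ∃ (a b c d : Fin (g + 1))
        (hab : a < b) (hbc : b < c) (hcd : c < d), f = pfaff g a b c d hab hbc hcd})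
    -- the ideal generated by `Λ³G*` :
    (hI₁ : I₁ = Ideal.span {f | ∃ (b c d : Fin (g + 1))
        (h0b : (0 : Fin (g + 1)) < b) (hbc : b < c) (hcd : c < d),
        f = pfaff g 0 b c d h0b hbc hcd}) :
    L ⊓ Pl = I₁ := by
  subst hL hPl hI₁
  rw [span_pfaffians_eq_sup]
  exact Ideal.inf_sup_span_eq_of_retraction (projWedgeTwo g).toRingHom
    (span_linearForms_le_ker g) (sub_projWedgeTwo_mem g) (span_pfaffiansWithZero_le g)
    (fun _ ⟨_, _, _, _, h0a, hab, hbc, hcd, hf⟩ => hf ▸ projWedgeTwo_pfaff g h0a hab hbc hcd)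
    (span_linearForms_mul_le g)
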